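/- Let s₁, s₂ be positive real numbers with 1/s₁ + 1/s₂ < 2 (equivalently s₁ > 1/2 and s₂(1 − 1/(2s₁)) > 1/2). Then the integral ∫_{ℝ²} (1 + |ξ₁|^{2s₁} + |ξ₂|^{2s₂})^{−1} dξ is finite. -/

import Mathlib

open MeasureTheory Real Set
open scoped FourierTransform ENNReal SchwartzMap

noncomputable section

/-! ### The plane and differential operators -/

/-- The plane `ℝ²`. -/
abbrev Plane := EuclideanSpace ℝ (Fin 2)

/-- Classical partial derivative in direction `i` of a scalar function on the plane. -/
def pd (i : Fin 2) (f : Plane → ℝ) (x : Plane) : ℝ :=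
  fderiv ℝ f x (EuclideanSpace.single i 1)

/-- Time derivative of a space-time function. -/
def ptd (φ : ℝ × Plane → ℝ) (p : ℝ × Plane) : ℝ := fderiv ℝ φ p (1, 0)

/-- Spatial partial derivative of a space-time function. -/
def pxd (i : Fin 2) (φ : ℝ × Plane → ℝ) (p : ℝ × Plane) : ℝ :=
  fderiv ℝ φ p (0, EuclideanSpace.single i 1)

/-- `g` is the weak (distributional) partial derivative `∂ᵢ f`. -/
def IsWeakPD (i : Fin 2) (f g : Plane → ℝ) : Prop :=
  ∀ ψ : Plane → ℝ, ContDiff ℝ (⊤ : ℕ∞) ψ → HasCompactSupport ψ →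
    ∫ x, g x * ψ x = - ∫ x, f x * pd i ψ x

/-- `w` is the weak vorticity `∂₁ v² − ∂₂ v¹` of the planar vector field `v`. -/
def IsWeakVorticity (v : Plane → Plane) (w : Plane → ℝ) : Prop :=
  ∀ ψ : Plane → ℝ, ContDiff ℝ (⊤ : ℕ∞) ψ → HasCompactSupport ψ →
    ∫ x, w x * ψ x = - ∫ x, (v x 1 * pd 0 ψ x - v x 0 * pd 1 ψ x)

/-- The classical vorticity `∂₁ v² − ∂₂ v¹` of a (differentiable) planar vector field. -/
def vorticity (v : Plane → Plane) (x : Plane) : ℝ :=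
  pd 0 (fun y => v y 1) x - pd 1 (fun y => v y 0) x

/-- A planar vector field is weakly divergence free. -/
def WeakDivFree (v : Plane → Plane) : Prop :=
  ∀ ψ : Plane → ℝ, ContDiff ℝ (⊤ : ℕ∞) ψ → HasCompactSupport ψ →
    ∫ x, (∑ i, v x i * pd i ψ x) = 0

/-! ### Sobolev spaces via the Fourier transform -/

/-- `g` is the (distributional) Fourier transform of `f : ℝ² → ℝ`, characterized by
duality against Schwartz functions. -/
def IsFourierTransformOf (f : Plane → ℝ) (g : Plane → ℂ) : Prop :=
  ∀ φ : 𝓢(Plane, ℂ), ∫ ξ, g ξ * φ ξ = ∫ x, (f x : ℂ) * (𝓕 (φ : Plane → ℂ)) x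

/-- Squared `Hˢ(ℝ²)` Sobolev norm, `∫ (1+|ξ|²)^s |f̂(ξ)|² dξ` (with value `∞` if `f`
has no `L²`-type distributional Fourier transform). -/
def hNormSq (s : ℝ) (f : Plane → ℝ) : ℝ≥0∞ :=
  ⨅ (g : Plane → ℂ) (_ : IsFourierTransformOf f g),
    ∫⁻ ξ, ENNReal.ofReal ((1 + ‖ξ‖ ^ 2) ^ s) * (‖g ξ‖₊ : ℝ≥0∞) ^ 2

/-- Membership in the Sobolev space `Hˢ(ℝ²)`. -/
def MemH (s : ℝ) (f : Plane → ℝ) : Prop :=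
  MemLp f 2 volume ∧ hNormSq s f < ⊤

/-- Membership of a planar vector field in `Hˢ(ℝ²)` (componentwise). -/
def MemHVec (s : ℝ) (v : Plane → Plane) : Prop :=
  ∀ i, MemH s fun x => v x i

/-! ### The spaces `√L`, `L` and `LL^{1/2}` -/

/-- The `√L` norm: `sup_{2 ≤ p < ∞} ‖f‖_{L^p} / √(p-1)`. -/
def sqrtLNorm {F : Type*} [NormedAddCommGroup F] (f : Plane → F) : ℝ≥0∞ :=
  ⨆ p : {p : ℝ // 2 ≤ p}, eLpNorm f (ENNReal.ofReal p.1) volume /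
    ENNReal.ofReal (Real.sqrt (p.1 - 1))

/-- Membership in the space `√L`. -/
def MemSqrtL {F : Type*} [NormedAddCommGroup F] (f : Plane → F) : Prop :=
  (∀ p : ℝ, 2 ≤ p → MemLp f (ENNReal.ofReal p) volume) ∧ sqrtLNorm f < ⊤

/-- The `L` norm: `sup_{2 ≤ p < ∞} ‖f‖_{L^p} / p`. -/
def lLNorm {F : Type*} [NormedAddCommGroup F] (f : Plane → F) : ℝ≥0∞ :=
  ⨆ p : {p : ℝ // 2 ≤ p}, eLpNorm f (ENNReal.ofReal p.1) volume / ENNReal.ofReal p.1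

/-- Membership in the space `L`. -/
def MemLL {F : Type*} [NormedAddCommGroup F] (f : Plane → F) : Prop :=
  (∀ p : ℝ, 2 ≤ p → MemLp f (ENNReal.ofReal p) volume) ∧ lLNorm f < ⊤

/-- The low-frequency cut-off `S_q f = 𝓕⁻(χ(2^{-q}·) 𝓕 f)`, realized as the
convolution of `f` with the dilated kernel `2^{2q} (𝓕⁻ χ)(2^q ·)`. -/
def lowFreqCutoff (χ : Plane → ℝ) (q : ℕ) (f : Plane → ℝ) : Plane → ℂ :=
  fun x => ∫ y, ((2 : ℝ) ^ (2 * q) * f y : ℂ) *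
    (𝓕⁻ fun ξ => (χ ξ : ℂ)) ((2 : ℝ) ^ q • (x - y))

/-- The `LL^{1/2}` norm `sup_{q ≥ 0} ‖S_q f‖_{L^∞} / √(q+1)`, relative to the
cut-off function `χ`. -/
def llHalfNorm (χ : Plane → ℝ) (f : Plane → ℝ) : ℝ≥0∞ :=
  ⨆ q : ℕ, eLpNorm (lowFreqCutoff χ q f) ⊤ volume /
    ENNReal.ofReal (Real.sqrt (q + 1))

/-- An admissible dyadic cut-off function: smooth, `[0,1]`-valued, equal to `1` on
the unit ball and supported in the ball of radius `2`. -/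
def IsCutoff (χ : Plane → ℝ) : Prop :=
  ContDiff ℝ (⊤ : ℕ∞) χ ∧ (∀ ξ, χ ξ ∈ Set.Icc (0:ℝ) 1) ∧
    (∀ ξ : Plane, ‖ξ‖ ≤ 1 → χ ξ = 1) ∧ ∀ ξ : Plane, 2 ≤ ‖ξ‖ → χ ξ = 0

/-! ### The operators `|∂ᵢ|^σ` -/

/-- The Fourier multiplier `|∂ᵢ|^σ` (symbol `|ξᵢ|^σ`) applied to a nice function. -/
def absDOp (i : Fin 2) (σ : ℝ) (φ : Plane → ℂ) : Plane → ℂ :=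
  𝓕⁻ fun ξ => (|ξ i| ^ σ : ℝ) * 𝓕 φ ξ

/-- `g = |∂ᵢ|^σ f` in the sense of tempered distributions. -/
def IsAbsD (i : Fin 2) (σ : ℝ) (f g : Plane → ℝ) : Prop :=
  ∀ φ : 𝓢(Plane, ℂ), ∫ x, (g x : ℂ) * φ x = ∫ x, (f x : ℂ) * absDOp i σ (φ : Plane → ℂ) x

/-! ### Weak solutions of the two Boussinesq systems -/

/-- Admissible scalar space-time test functions which moreover vanish for `t ≥ T`
(`T = ∞` corresponds to no constraint, i.e. the globally-in-time formulation). -/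
def IsTest (T : ℝ≥0∞) (φ : ℝ × Plane → ℝ) : Prop :=
  ContDiff ℝ (⊤ : ℕ∞) φ ∧ HasCompactSupport φ ∧ ∀ p : ℝ × Plane, T ≤ ENNReal.ofReal p.1 → φ p = 0

/-- Admissible vector-valued space-time test functions: smooth, compactly supported,
divergence free in the space variable and vanishing for `t ≥ T`. -/
def IsTestVec (T : ℝ≥0∞) (Φ : ℝ × Plane → Plane) : Prop :=
  ContDiff ℝ (⊤ : ℕ∞) Φ ∧ HasCompactSupport Φ ∧
    (∀ p : ℝ × Plane, T ≤ ENNReal.ofReal p.1 → Φ p = 0) ∧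
    ∀ p : ℝ × Plane, (∑ i, pxd i (fun q => Φ q i) p) = 0

/-- The time slab `(0, T)` (all of `(0,∞)` when `T = ∞`). -/
def slab (T : ℝ≥0∞) : Set ℝ := {t : ℝ | 0 < t ∧ ENNReal.ofReal t < T}

/-- Weak (distributional) solution of the anisotropic Boussinesq system (1)
`∂ₜθ + u·∇θ = 0`, `∂ₜu + u·∇u − ν ∂₁²u + ∇Π = θ e₂`, `div u = 0` on `[0,T] × ℝ²`,
with initial data `(θ₀, u₀)`.  The pressure is eliminated by testing the velocity
equation against divergence-free fields. -/
def IsWeakSol1 (ν : ℝ) (θ₀ : Plane → ℝ) (u₀ : Plane → Plane)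
    (θ : ℝ → Plane → ℝ) (u : ℝ → Plane → Plane) (T : ℝ≥0∞) : Prop :=
  θ 0 = θ₀ ∧ u 0 = u₀ ∧ (∀ t ∈ slab T, WeakDivFree (u t)) ∧
  (∀ φ : ℝ × Plane → ℝ, IsTest T φ →
    (∫ t in slab T, ∫ x, θ t x *
        (ptd φ (t, x) + ∑ i, u t x i * pxd i φ (t, x)))
      + ∫ x, θ₀ x * φ (0, x) = 0) ∧
  (∀ Φ : ℝ × Plane → Plane, IsTestVec T Φ →
    (∫ t in slab T, ∫ x,
        ((∑ i, u t x i * ptd (fun q => Φ q i) (t, x))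
          + (∑ i, ∑ j, u t x i * u t x j * pxd j (fun q => Φ q i) (t, x))
          + ν * (∑ i, u t x i * pxd 0 (pxd 0 fun q => Φ q i) (t, x))
          + θ t x * Φ (t, x) 1))
      + ∫ x, (∑ i, u₀ x i * Φ (0, x) i) = 0)

/-- Weak (distributional) solution of the Boussinesq system (2) with horizontal
diffusivity: `∂ₜθ + u·∇θ − κ ∂₁²θ = 0`, `∂ₜu + u·∇u + ∇Π = θ e₂`, `div u = 0`
on `[0,T] × ℝ²`, with initial data `(θ₀, u₀)`. -/
def IsWeakSol2 (κ : ℝ) (θ₀ : Plane → ℝ) (u₀ : Plane → Plane)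
    (θ : ℝ → Plane → ℝ) (u : ℝ → Plane → Plane) (T : ℝ≥0∞) : Prop :=
  θ 0 = θ₀ ∧ u 0 = u₀ ∧ (∀ t ∈ slab T, WeakDivFree (u t)) ∧
  (∀ φ : ℝ × Plane → ℝ, IsTest T φ →
    (∫ t in slab T, ∫ x, θ t x *
        (ptd φ (t, x) + (∑ i, u t x i * pxd i φ (t, x)) + κ * pxd 0 (pxd 0 φ) (t, x)))
      + ∫ x, θ₀ x * φ (0, x) = 0) ∧
  (∀ Φ : ℝ × Plane → Plane, IsTestVec T Φ →
    (∫ t in slab T, ∫ x,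
        ((∑ i, u t x i * ptd (fun q => Φ q i) (t, x))
          + (∑ i, ∑ j, u t x i * u t x j * pxd j (fun q => Φ q i) (t, x))
          + θ t x * Φ (t, x) 1))
      + ∫ x, (∑ i, u₀ x i * Φ (0, x) i) = 0)

/-! ### Time-continuity classes -/

/-- Weak continuity on `I` of a time-dependent family, tested against `L^q` functions. -/
def WeakContPair (f : ℝ → Plane → ℝ) (I : Set ℝ) (q : ℝ≥0∞) : Prop :=
  ∀ g : Plane → ℝ, MemLp g q volume →
    ContinuousOn (fun t => ∫ x, f t x * g x) I

/-- `θ ∈ C_b(I; L²)`: bounded, strongly continuous, with values in `L²`. -/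
def CbL2 (f : ℝ → Plane → ℝ) (I : Set ℝ) : Prop :=
  (∀ t ∈ I, MemLp (f t) 2 volume) ∧
  (∃ M : ℝ≥0∞, M < ⊤ ∧ ∀ t ∈ I, eLpNorm (f t) 2 volume ≤ M) ∧
  ∀ t₀ ∈ I, Filter.Tendsto (fun t => eLpNorm (fun x => f t x - f t₀ x) 2 volume)
    (nhdsWithin t₀ I) (nhds 0)

/-- `θ ∈ C_w(I; L²)`: weakly continuous with values in `L²`. -/
def CwL2 (f : ℝ → Plane → ℝ) (I : Set ℝ) : Prop :=
  (∀ t ∈ I, MemLp (f t) 2 volume) ∧ WeakContPair f I 2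

/-- `θ ∈ C_w(I; L^∞)`: weakly-* continuous with values in `L^∞`, locally bounded. -/
def CwLinf (f : ℝ → Plane → ℝ) (I : Set ℝ) : Prop :=
  (∀ t ∈ I, MemLp (f t) ⊤ volume) ∧
  (∃ M : ℝ≥0∞, M < ⊤ ∧ ∀ t ∈ I, eLpNorm (f t) ⊤ volume ≤ M) ∧
  WeakContPair f I 1

/-- Scalar field in `C_w(I; Hˢ)`: values in `Hˢ`, locally bounded in the `Hˢ` norm,
and weakly continuous. -/
def CwHs (s : ℝ) (f : ℝ → Plane → ℝ) (I : Set ℝ) : Prop :=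
  (∀ t ∈ I, MemH s (f t)) ∧
  (∀ K : Set ℝ, IsCompact K → K ⊆ I → ∃ M : ℝ≥0∞, M < ⊤ ∧
      ∀ t ∈ K, hNormSq s (f t) ≤ M) ∧
  WeakContPair f I 2

/-- Planar vector field in `C_w(I; Hˢ)` (componentwise). -/
def CwHsVec (s : ℝ) (u : ℝ → Plane → Plane) (I : Set ℝ) : Prop :=
  ∀ i, CwHs s (fun t x => u t x i) I

/-- Scalar field in `C(I; Hˢ)`: values in `Hˢ`, strongly continuous for the `Hˢ` norm. -/
def ContHs (s : ℝ) (f : ℝ → Plane → ℝ) (I : Set ℝ) : Prop :=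
  (∀ t ∈ I, MemH s (f t)) ∧
  ∀ t₀ ∈ I, Filter.Tendsto
    (fun t => eLpNorm (fun x => f t x - f t₀ x) 2 volume
        + hNormSq s fun x => f t x - f t₀ x)
    (nhdsWithin t₀ I) (nhds 0)

/-- Planar vector field in `C(I; Hˢ)` (componentwise). -/
def ContHsVec (s : ℝ) (u : ℝ → Plane → Plane) (I : Set ℝ) : Prop :=
  ∀ i, ContHs s (fun t x => u t x i) I

/-! ### Anisotropic norms -/

/-- The point `(a, b)` of the plane. -/
def mk2 (a b : ℝ) : Plane := WithLp.toLp 2 ![a, b]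

/-- The anisotropic norm `‖f‖_{L²_{x₁}(L^∞_{x₂})}`. -/
def l2linfNorm (f : Plane → ℝ) : ℝ≥0∞ :=
  (∫⁻ a : ℝ, (eLpNorm (fun b => f (mk2 a b)) ⊤ volume) ^ 2) ^ (1/2 : ℝ)

/-- The anisotropic norm `‖f‖_{L^∞_{x₁}(L²_{x₂})}`. -/
def linfl2Norm (f : Plane → ℝ) : ℝ≥0∞ :=
  essSup (fun a : ℝ => eLpNorm (fun b => f (mk2 a b)) 2 volume) volume

/-- One–dimensional distributional Fourier transform. -/
def IsFourierTransformOf1 (f : ℝ → ℝ) (g : ℝ → ℂ) : Prop :=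
  ∀ φ : 𝓢(ℝ, ℂ), ∫ ξ, g ξ * φ ξ = ∫ x, (f x : ℂ) * (𝓕 (φ : ℝ → ℂ)) x

/-- Squared `Hˢ(ℝ)` norm of a function of one variable. -/
def hNormSq1 (s : ℝ) (f : ℝ → ℝ) : ℝ≥0∞ :=
  ⨅ (g : ℝ → ℂ) (_ : IsFourierTransformOf1 f g),
    ∫⁻ ξ : ℝ, ENNReal.ofReal ((1 + ξ ^ 2) ^ s) * (‖g ξ‖₊ : ℝ≥0∞) ^ 2

/-- The anisotropic norm `‖h‖_{L²_{x₂}(H^{1/2}_{x₁})}`. -/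
def l2hHalfNorm (h : Plane → ℝ) : ℝ≥0∞ :=
  (∫⁻ b : ℝ, hNormSq1 (1/2) fun a => h (mk2 a b)) ^ (1/2 : ℝ)


lemma aux_oneDimFinite {c θ : ℝ} (hc : 0 < c) (hθ : 0 < θ) (h1 : 1 < c * θ) :
    ∫⁻ x : ℝ, ENNReal.ofReal ((1 + |x| ^ c) ^ (-θ)) < ⊤ := by
  have key : ∀ x : ℝ, (1 + |x| ^ c) ^ (-θ) ≤ 2 ^ (c * θ) * (1 + ‖x‖) ^ (-(c * θ)) := by
    intro x
    have hx : (0:ℝ) ≤ |x| := abs_nonneg x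
    have hb : (0:ℝ) < 1 + |x| ^ c := by positivity
    have h2 : (1 + |x|) ^ c ≤ 2 ^ c * (1 + |x| ^ c) := by
      have hmax : 1 + |x| ≤ 2 * max 1 |x| := by
        rcases le_total |x| 1 with h | h
        · rw [max_eq_left h]; linarith
        · rw [max_eq_right h]; linarith
      calc (1 + |x|) ^ c ≤ (2 * max 1 |x|) ^ c :=
            Real.rpow_le_rpow (by linarith) hmax hc.le
        _ = 2 ^ c * (max 1 |x|) ^ c :=
            Real.mul_rpow (by norm_num) (le_trans zero_le_one (le_max_left 1 _))
        _ ≤ 2 ^ c * (1 + |x| ^ c) := by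
            gcongr
            rcases le_total |x| 1 with h | h
            · rw [max_eq_left h, Real.one_rpow]; nlinarith [Real.rpow_nonneg hx c]
            · rw [max_eq_right h]; nlinarith [Real.rpow_nonneg hx c]
    have h3 : (2:ℝ) ^ (-c) * (1 + |x|) ^ c ≤ 1 + |x| ^ c := by
      rw [Real.rpow_neg (by norm_num)]
      rw [inv_mul_le_iff₀ (by positivity)]
      linarith
    have h4 : (1 + |x| ^ c) ^ (-θ) ≤ ((2:ℝ) ^ (-c) * (1 + |x|) ^ c) ^ (-θ) :=
      Real.rpow_le_rpow_of_nonpos (by positivity) h3 (by linarith)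
    refine h4.trans_eq ?_
    rw [Real.mul_rpow (by positivity) (by positivity), ← Real.rpow_mul (by norm_num),
      ← Real.rpow_mul (by linarith)]
    norm_num [Real.norm_eq_abs]
  calc ∫⁻ x : ℝ, ENNReal.ofReal ((1 + |x| ^ c) ^ (-θ))
      ≤ ∫⁻ x : ℝ, ENNReal.ofReal (2 ^ (c * θ)) * ENNReal.ofReal ((1 + ‖x‖) ^ (-(c * θ))) := by
        refine lintegral_mono fun x => ?_
        rw [← ENNReal.ofReal_mul (by positivity)]
        exact ENNReal.ofReal_le_ofReal (key x)
    _ = ENNReal.ofReal (2 ^ (c * θ)) * ∫⁻ x : ℝ, ENNReal.ofReal ((1 + ‖x‖) ^ (-(c * θ))) :=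
        lintegral_const_mul' _ _ ENNReal.ofReal_ne_top
    _ < ⊤ := by
        refine ENNReal.mul_lt_top ENNReal.ofReal_lt_top ?_
        exact finite_integral_one_add_norm (by simpa using h1)

lemma aux_split {a b θ : ℝ} (ha : 0 ≤ a) (hb : 0 ≤ b) (hθ0 : 0 < θ) (hθ1 : θ < 1) :
    (1 + a + b)⁻¹ ≤ (1 + a) ^ (-θ) * (1 + b) ^ (-(1 - θ)) := by
  have h1 : (0:ℝ) < 1 + a := by linarith
  have h2 : (0:ℝ) < 1 + b := by linarith
  have h3 : (0:ℝ) < 1 + a + b := by linarith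
  have key : (1 + a) ^ θ * (1 + b) ^ (1 - θ) ≤ 1 + a + b := by
    calc (1 + a) ^ θ * (1 + b) ^ (1 - θ)
        ≤ (1 + a + b) ^ θ * (1 + a + b) ^ (1 - θ) :=
          mul_le_mul (Real.rpow_le_rpow h1.le (by linarith) hθ0.le)
            (Real.rpow_le_rpow h2.le (by linarith) (by linarith))
            (Real.rpow_nonneg h2.le _) (Real.rpow_nonneg h3.le _)
      _ = 1 + a + b := by
          rw [← Real.rpow_add h3]; norm_num
  rw [Real.rpow_neg h1.le, Real.rpow_neg h2.le, ← mul_inv]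
  exact inv_anti₀ (by positivity) key

/-- If `s₁, s₂ > 0` and `1/s₁ + 1/s₂ < 2`, then
`∫_{ℝ²} (1 + |ξ₁|^{2s₁} + |ξ₂|^{2s₂})⁻¹ dξ < ∞`. -/
theorem integrable_anisotropic_weight (s₁ s₂ : ℝ) (hs₁ : 0 < s₁) (hs₂ : 0 < s₂)
    (h : 1 / s₁ + 1 / s₂ < 2) :
    (∫⁻ ξ : Plane,
        ENNReal.ofReal ((1 + |ξ 0| ^ (2 * s₁) + |ξ 1| ^ (2 * s₂))⁻¹)) < ⊤ := by
  set α := 2 * s₁ with hαdef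
  set β := 2 * s₂ with hβdef
  have hα : 0 < α := by positivity
  have hβ : 0 < β := by positivity
  have hsum : 1 / α + 1 / β < 1 := by
    have : 1 / α + 1 / β = (1 / s₁ + 1 / s₂) / 2 := by
      rw [hαdef, hβdef]; field_simp
    rw [this]; linarith
  set θ := (1 / α + (1 - 1 / β)) / 2 with hθdef
  have hia : 0 < 1 / α := by positivity
  have hib : 0 < 1 / β := by positivity
  have hθα : 1 / α < θ := by rw [hθdef]; linarith
  have hθβ : 1 / β < 1 - θ := by rw [hθdef]; linarith
  have hθ0 : 0 < θ := lt_trans hia hθα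
  have hθ1 : θ < 1 := by linarith
  have hcθ1 : 1 < α * θ := by
    have := (div_lt_iff₀ hα).mp hθα
    linarith [this]
  have hcθ2 : 1 < β * (1 - θ) := by
    have := (div_lt_iff₀ hβ).mp hθβ
    linarith [this]
  have e : MeasurePreserving
      (((MeasurableEquiv.toLp 2 (Fin 2 → ℝ)).symm).trans MeasurableEquiv.finTwoArrow)
      volume volume :=
    (volume_preserving_finTwoArrow ℝ).comp
      (EuclideanSpace.volume_preserving_symm_measurableEquiv_toLp (Fin 2))
  have meas1 : AEMeasurable (fun x : ℝ => ENNReal.ofReal ((1 + |x| ^ α) ^ (-θ))) volume := by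
    fun_prop
  have meas2 : AEMeasurable (fun x : ℝ => ENNReal.ofReal ((1 + |x| ^ β) ^ (-(1 - θ)))) volume := by
    fun_prop
  calc (∫⁻ ξ : Plane, ENNReal.ofReal ((1 + |ξ 0| ^ α + |ξ 1| ^ β)⁻¹))
      = ∫⁻ p : ℝ × ℝ, ENNReal.ofReal ((1 + |p.1| ^ α + |p.2| ^ β)⁻¹) :=
        e.lintegral_comp_emb
          (((MeasurableEquiv.toLp 2 (Fin 2 → ℝ)).symm).trans
            MeasurableEquiv.finTwoArrow).measurableEmbedding
          (fun p : ℝ × ℝ => ENNReal.ofReal ((1 + |p.1| ^ α + |p.2| ^ β)⁻¹))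
    _ ≤ ∫⁻ p : ℝ × ℝ, ENNReal.ofReal ((1 + |p.1| ^ α) ^ (-θ)) *
          ENNReal.ofReal ((1 + |p.2| ^ β) ^ (-(1 - θ))) := by
        refine lintegral_mono fun p => ?_
        rw [← ENNReal.ofReal_mul (Real.rpow_nonneg (by positivity) _)]
        exact ENNReal.ofReal_le_ofReal
          (aux_split (Real.rpow_nonneg (abs_nonneg _) _)
            (Real.rpow_nonneg (abs_nonneg _) _) hθ0 hθ1)
    _ = (∫⁻ x : ℝ, ENNReal.ofReal ((1 + |x| ^ α) ^ (-θ))) *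
          ∫⁻ x : ℝ, ENNReal.ofReal ((1 + |x| ^ β) ^ (-(1 - θ))) :=
        lintegral_prod_mul meas1 meas2
    _ < ⊤ := ENNReal.mul_lt_top (aux_oneDimFinite hα hθ0 hcθ1)
        (aux_oneDimFinite hβ (by linarith) hcθ2)


end
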